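/- arXiv:1310.6817 — 7 statements merged into one kernel-verified Lean document; each statement's English description precedes it below -/
import Mathlib

section
/- For any two permutations f, g in S_n, the Kendall tau distance between f and g is at least the l1-distance between their factoradic representations: d_K(f,g) ≥ Σ_{i=1}^{n} |Φ(f)_i − Φ(g)_i|. -/
open Finset

/-- Kendall's tau distance: minimal number of adjacent transpositions
(in one-line notation, i.e. swaps of values in consecutive positions)
transforming `f` into `g`. -/
noncomputable def kendall {n : ℕ} (f g : Equiv.Perm (Fin n)) : ℕ :=
  sInf {m | ∃ l : List (Equiv.Perm (Fin n)), l.length = m ∧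
    (∀ s ∈ l, ∃ i j : Fin n, (i : ℕ) + 1 = (j : ℕ) ∧ s = Equiv.swap i j) ∧
    g = f * l.prod}

/-- The factoradic representation (0-indexed): `phi f i` counts values smaller
than `i` that appear to the right of `i` in the one-line notation of `f`. -/
noncomputable def phi {n : ℕ} (f : Equiv.Perm (Fin n)) (i : Fin n) : ℕ :=
  Set.ncard {j : Fin n | j < i ∧ f⁻¹ i < f⁻¹ j}

/-- `projUp hk f` is `f|^{[k]}`: keep only the values `0,…,k-1` of `f` and
relabel them to `Fin k`, preserving relative order of positions. -/
noncomputable def projUp {n k : ℕ} (hk : k ≤ n) (f : Equiv.Perm (Fin n)) :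
    Equiv.Perm (Fin k) := by
  classical
  let g : Fin k → Fin n := fun b => f⁻¹ (Fin.castLE hk b)
  have hg : Function.Injective g :=
    fun a b hab => Fin.castLE_injective hk (f⁻¹.injective hab)
  let s : Finset (Fin n) := Finset.univ.image g
  have hs : s.card = k := by
    rw [Finset.card_image_of_injective _ hg, Finset.card_univ, Fintype.card_fin]
  have hr : Set.range g = ↑s := by ext x; simp [s, g]
  exact ((Equiv.ofInjective g hg).trans
    ((Equiv.setCongr hr).trans (s.orderIsoOfFin hs).toEquiv.symm)).symm

/-- `projDown hk g` is `g|_{[k]}`: keep only the first `k` coordinates of `g`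
and relabel the values to `Fin k`, preserving relative order. -/
noncomputable def projDown {n k : ℕ} (hk : k ≤ n) (g : Equiv.Perm (Fin n)) :
    Equiv.Perm (Fin k) :=
  (projUp hk g⁻¹)⁻¹

/-- The ℓ∞ distance between permutations. -/
def dinf {n : ℕ} (f g : Equiv.Perm (Fin n)) : ℕ :=
  Finset.univ.sup (fun i : Fin n => ((f i : ℤ) - (g i : ℤ)).natAbs)

/-!
A single adjacent transposition `f ↦ f * swap p q` exchanges two values `l < m` sitting in
consecutive positions, so the only inversion it creates or destroys is the pair `(l, m)`.
Hence it changes the factoradic vector in the coordinate `m` alone, and there by at most one.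
The `ℓ¹` distance between factoradic vectors is a pseudometric, so along a shortest word of
adjacent transpositions from `f` to `g` it grows by at most one per letter.
-/

open Equiv

theorem Equiv.swap_lt_swap_iff_of_covBy {α : Type*} [LinearOrder α] {p q x y : α}
    (hpq : p ⋖ q) (h : ¬(x = p ∧ y = q)) (h' : ¬(x = q ∧ y = p)) :
    swap p q x < swap p q y ↔ x < y := by
  have hlt := hpq.lt
  have hl := @hpq.lt_iff_le_left
  have hr := @hpq.lt_iff_le_right
  simp only [swap_apply_def]
  split_ifs <;> subst_vars <;> grind

theorem Finset.natAbs_card_sub_card_le_one_of_erase_eq {α : Type*} [DecidableEq α]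
    {s t : Finset α} {a : α} (h : s.erase a = t.erase a) :
    ((#s : ℤ) - #t).natAbs ≤ 1 := by
  have hs := s.pred_card_le_card_erase (a := a)
  have ht := t.pred_card_le_card_erase (a := a)
  have hs' := s.card_erase_le (a := a)
  have ht' := t.card_erase_le (a := a)
  rw [h] at hs hs'
  omega

namespace Equiv.Perm

variable {n : ℕ}

def IsAdjacentSwap (s : Perm (Fin n)) : Prop :=
  ∃ i j : Fin n, (i : ℕ) + 1 = j ∧ s = swap i j

theorem IsAdjacentSwap.exists_covBy {s : Perm (Fin n)} (hs : s.IsAdjacentSwap) :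
    ∃ p q : Fin n, p ⋖ q ∧ s = swap p q := by
  obtain ⟨p, q, hpq, rfl⟩ := hs
  exact ⟨p, q, Fin.covBy_iff.2 (Nat.covBy_iff_add_one_eq.2 hpq), rfl⟩

theorem exists_list_isAdjacentSwap_prod_eq (σ : Perm (Fin n)) :
    ∃ l : List (Perm (Fin n)), (∀ s ∈ l, s.IsAdjacentSwap) ∧ l.prod = σ := by
  cases n with
  | zero => exact ⟨[], by simp, Subsingleton.elim _ _⟩
  | succ k =>
    have hσ : σ ∈ Submonoid.closure (Set.range fun i : Fin k => swap i.castSucc i.succ) := by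
      rw [mclosure_swap_castSucc_succ]; trivial
    obtain ⟨l, hl, hprod⟩ := Submonoid.exists_list_of_mem_closure hσ
    refine ⟨l, fun s hs => ?_, hprod⟩
    obtain ⟨i, rfl⟩ := hl s hs
    exact ⟨i.castSucc, i.succ, by simp, rfl⟩

end Equiv.Perm

section Factoradic

variable {n : ℕ}

open Perm

theorem exists_list_length_eq_kendall (f g : Perm (Fin n)) :
    ∃ l : List (Perm (Fin n)), l.length = kendall f g ∧ (∀ s ∈ l, s.IsAdjacentSwap) ∧
      g = f * l.prod := by
  obtain ⟨l, hl, hprod⟩ := exists_list_isAdjacentSwap_prod_eq (f⁻¹ * g)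
  exact Nat.sInf_mem (s := {m | ∃ l : List (Perm (Fin n)), l.length = m ∧
    (∀ s ∈ l, s.IsAdjacentSwap) ∧ g = f * l.prod})
    ⟨l.length, l, rfl, hl, by rw [hprod, mul_inv_cancel_left]⟩

theorem phi_eq_card (f : Perm (Fin n)) (i : Fin n) :
    phi f i = #{j | j < i ∧ f⁻¹ i < f⁻¹ j} := by
  rw [phi, ← Set.ncard_coe_finset]
  simp

theorem inv_mul_swap_lt_inv_mul_swap_iff (f : Perm (Fin n)) {p q x y : Fin n} (hpq : p ⋖ q)
    (h : ¬(x = f p ∧ y = f q)) (h' : ¬(x = f q ∧ y = f p)) :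
    (f * swap p q)⁻¹ x < (f * swap p q)⁻¹ y ↔ f⁻¹ x < f⁻¹ y := by
  rw [mul_inv_rev, swap_inv, mul_apply, mul_apply]
  refine swap_lt_swap_iff_of_covBy hpq ?_ ?_ <;> simpa only [inv_eq_iff_eq] using ‹_›

theorem phi_mul_swap_of_ne_max (f : Perm (Fin n)) {p q k : Fin n} (hpq : p ⋖ q)
    (hk : k ≠ max (f p) (f q)) : phi (f * swap p q) k = phi f k := by
  rw [phi_eq_card, phi_eq_card]
  refine congrArg card (filter_congr fun j _ => and_congr_right fun hjk => ?_)
  apply inv_mul_swap_lt_inv_mul_swap_iff f hpq <;>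
  · rintro ⟨rfl, rfl⟩
    exact hk (by simp [hjk.le])

theorem natAbs_phi_mul_swap_sub_le_one (f : Perm (Fin n)) {p q : Fin n} (hpq : p ⋖ q)
    (k : Fin n) : ((phi (f * swap p q) k : ℤ) - phi f k).natAbs ≤ 1 := by
  rw [phi_eq_card, phi_eq_card]
  refine natAbs_card_sub_card_le_one_of_erase_eq (a := min (f p) (f q)) ?_
  ext j
  simp only [mem_erase, mem_filter, mem_univ, true_and]
  refine and_congr_right fun hj => and_congr_right fun hjk => ?_
  apply inv_mul_swap_lt_inv_mul_swap_iff f hpq <;>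
  · rintro ⟨rfl, rfl⟩
    exact hj (by simp [hjk.le])

noncomputable def factoradicDist (f g : Perm (Fin n)) : ℕ :=
  ∑ i, ((phi f i : ℤ) - phi g i).natAbs

theorem factoradicDist_comm (f g : Perm (Fin n)) : factoradicDist f g = factoradicDist g f :=
  sum_congr rfl fun i _ => by rw [← Int.natAbs_neg, neg_sub]

theorem factoradicDist_triangle (f g h : Perm (Fin n)) :
    factoradicDist f h ≤ factoradicDist f g + factoradicDist g h := by
  rw [factoradicDist, factoradicDist, factoradicDist, ← sum_add_distrib]
  gcongr with i
  rw [← sub_add_sub_cancel (phi f i : ℤ) (phi g i)]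
  exact Int.natAbs_add_le _ _

theorem factoradicDist_mul_swap_le_one (f : Perm (Fin n)) {p q : Fin n} (hpq : p ⋖ q) :
    factoradicDist (f * swap p q) f ≤ 1 := by
  rw [factoradicDist, sum_eq_single (max (f p) (f q))]
  · exact natAbs_phi_mul_swap_sub_le_one f hpq _
  · intro k _ hk
    simp [phi_mul_swap_of_ne_max f hpq hk]
  · simp

theorem factoradicDist_mul_prod_le_length {l : List (Perm (Fin n))}
    (hl : ∀ s ∈ l, s.IsAdjacentSwap) (f : Perm (Fin n)) :
    factoradicDist (f * l.prod) f ≤ l.length := by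
  induction l generalizing f with
  | nil => simp [factoradicDist]
  | cons s l ih =>
    obtain ⟨p, q, hpq, rfl⟩ := (hl s List.mem_cons_self).exists_covBy
    calc factoradicDist (f * (swap p q :: l).prod) f
        ≤ factoradicDist (f * swap p q * l.prod) (f * swap p q) +
            factoradicDist (f * swap p q) f := by
          rw [List.prod_cons, ← mul_assoc]
          exact factoradicDist_triangle _ _ _
      _ ≤ l.length + 1 :=
          add_le_add (ih (fun s hs => hl s (List.mem_cons_of_mem _ hs)) _)
            (factoradicDist_mul_swap_le_one f hpq)
      _ = (swap p q :: l).length := rfl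

end Factoradic

/-- `d_K(f,g) ≥ Σ_i |Φ(f)_i − Φ(g)_i|`. -/
theorem stmt0 (n : ℕ) (f g : Equiv.Perm (Fin n)) :
    ∑ i : Fin n, ((phi f i : ℤ) - (phi g i : ℤ)).natAbs ≤ kendall f g := by
  obtain ⟨l, hlen, hl, rfl⟩ := exists_list_length_eq_kendall f g
  change factoradicDist f (f * l.prod) ≤ kendall f (f * l.prod)
  rw [factoradicDist_comm, ← hlen]
  exact factoradicDist_mul_prod_le_length hl f
end

section
/- For all n ≥ 1 and 0 ≤ r ≤ n(n−1)/2, the size of the ball of radius r in S_n under Kendall's tau metric is at most binom(n+r−1, n−1). -/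
open Finset

/-! An adjacent transposition creates at most one inversion, so `f⁻¹ * g` has at most
`kendall f g` inversions. The Lehmer code `phi` is injective, vanishes at the value `0` and sums
to the number of inversions; hence the ball of radius `r` embeds into the codes `c : Fin n → ℕ`
with `c 0 = 0` and `∑ i, c i ≤ r`. Storing the slack `r - ∑ i, c i` at `0` turns such codes into
multisets of size `r` on `Fin n`, of which there are `(n + r - 1).choose r`. -/

open Equiv

/-- Inversions are recorded as pairs of values, larger value first, so that the fibre over `i`
is counted by `phi h i`. -/
def inversions {n : ℕ} (h : Perm (Fin n)) : Finset (Fin n × Fin n) :=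
  univ.filter fun q => q.2 < q.1 ∧ h⁻¹ q.1 < h⁻¹ q.2

theorem inversions_one {n : ℕ} : inversions (1 : Perm (Fin n)) = ∅ := by
  ext q
  simp only [inversions, mem_filter, mem_univ, true_and, inv_one, Perm.one_apply,
    Finset.notMem_empty, iff_false, not_and, not_lt]
  exact le_of_lt

theorem swap_lt_swap_of_lt {n : ℕ} {a b x y : Fin n} (hab : (a : ℕ) + 1 = b) (hxy : x < y)
    (hne : (x, y) ≠ (a, b)) : swap a b x < swap a b y := by
  simp only [ne_eq, Prod.mk.injEq, Fin.ext_iff] at hne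
  rw [Fin.lt_def] at hxy ⊢
  simp only [swap_apply_def]
  split_ifs <;> simp only [Fin.ext_iff] at * <;> omega

theorem inversions_mul_swap_subset {n : ℕ} (p : Perm (Fin n)) {a b : Fin n}
    (hab : (a : ℕ) + 1 = b) : inversions (p * swap a b) ⊆ insert (p b, p a) (inversions p) := by
  rintro ⟨i, j⟩ hq
  simp only [inversions, mem_filter, mem_univ, true_and, mul_inv_rev, swap_inv,
    Perm.mul_apply] at hq
  obtain ⟨hji, hpos⟩ := hq
  rw [mem_insert]
  by_cases hba : (p⁻¹ i, p⁻¹ j) = (b, a)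
  · left
    simpa only [Prod.mk.injEq, Perm.inv_eq_iff_eq] using hba
  · right
    simp only [inversions, mem_filter, mem_univ, true_and]
    refine ⟨hji, lt_of_not_ge fun hle => ?_⟩
    have hlt : p⁻¹ j < p⁻¹ i := lt_of_le_of_ne hle fun h => hji.ne (p⁻¹.injective h)
    refine (swap_lt_swap_of_lt hab hlt ?_).not_gt hpos
    rintro ⟨⟩
    exact hba rfl

theorem card_inversions_mul_prod_le {n : ℕ} (p : Perm (Fin n)) (l : List (Perm (Fin n)))
    (hl : ∀ s ∈ l, ∃ i j : Fin n, (i : ℕ) + 1 = (j : ℕ) ∧ s = swap i j) :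
    #(inversions (p * l.prod)) ≤ #(inversions p) + l.length := by
  induction l generalizing p with
  | nil => simp
  | cons s l ih =>
    obtain ⟨i, j, hij, rfl⟩ := hl s List.mem_cons_self
    have hswap : #(inversions (p * swap i j)) ≤ #(inversions p) + 1 :=
      (card_le_card (inversions_mul_swap_subset p hij)).trans (card_insert_le _ _)
    have := ih (p * swap i j) fun s hs => hl s (List.mem_cons_of_mem _ hs)
    rw [List.prod_cons, ← mul_assoc, List.length_cons]
    omega

theorem exists_list_adjacent_swaps_prod_eq {n : ℕ} (h : Perm (Fin n)) :
    ∃ l : List (Perm (Fin n)),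
      (∀ s ∈ l, ∃ i j : Fin n, (i : ℕ) + 1 = (j : ℕ) ∧ s = swap i j) ∧ l.prod = h := by
  cases n with
  | zero => exact ⟨[], by simp, Subsingleton.elim _ _⟩
  | succ m =>
    have hmem : h ∈ Submonoid.closure (Set.range fun i : Fin m ↦ swap i.castSucc i.succ) := by
      rw [Perm.mclosure_swap_castSucc_succ]; trivial
    obtain ⟨l, hl, hprod⟩ := Submonoid.exists_list_of_mem_closure hmem
    refine ⟨l, fun s hs => ?_, hprod⟩
    obtain ⟨i, rfl⟩ := hl s hs
    exact ⟨i.castSucc, i.succ, by simp, rfl⟩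

theorem card_inversions_le_kendall {n : ℕ} (f g : Perm (Fin n)) :
    #(inversions (f⁻¹ * g)) ≤ kendall f g := by
  obtain ⟨l₀, hl₀, hprod₀⟩ := exists_list_adjacent_swaps_prod_eq (f⁻¹ * g)
  obtain ⟨l, hlen, hl, hg⟩ := Nat.sInf_mem (s := {m | ∃ l : List (Perm (Fin n)),
      l.length = m ∧ (∀ s ∈ l, ∃ i j : Fin n, (i : ℕ) + 1 = (j : ℕ) ∧ s = swap i j) ∧
      g = f * l.prod}) ⟨l₀.length, l₀, rfl, hl₀, by rw [hprod₀, mul_inv_cancel_left]⟩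
  calc #(inversions (f⁻¹ * g)) = #(inversions (1 * l.prod)) := by
        rw [hg, inv_mul_cancel_left, one_mul]
    _ ≤ #(inversions 1) + l.length := card_inversions_mul_prod_le 1 l hl
    _ = kendall f g := by rw [inversions_one, card_empty, zero_add]; exact hlen

theorem sum_phi_eq_card_inversions {n : ℕ} (h : Perm (Fin n)) :
    ∑ i, phi h i = #(inversions h) := by
  rw [inversions, card_filter, Fintype.sum_prod_type]
  refine sum_congr rfl fun i _ => ?_
  rw [phi, Set.ncard_eq_toFinset_card', ← card_filter]
  congr 1
  ext j
  simp

theorem Set.ncard_inter_Ioi_strictAntiOn {α : Type*} [LinearOrder α] {W : Set α}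
    (hW : W.Finite) : StrictAntiOn (fun a => (W ∩ Set.Ioi a).ncard) W := by
  intro a _ b hb hab
  refine Set.ncard_lt_ncard ((Set.ssubset_iff_of_subset ?_).2 ⟨b, ⟨hb, hab⟩, fun h => h.2.false⟩)
    (hW.inter_of_left _)
  exact Set.inter_subset_inter_right W (Set.Ioi_subset_Ioi hab.le)

theorem phi_eq_ncard_positions {n : ℕ} (h : Perm (Fin n)) (i : Fin n) :
    phi h i = ({x | h x ≤ i} ∩ Set.Ioi (h⁻¹ i)).ncard := by
  rw [phi, ← Set.ncard_preimage_of_injective_subset_range h.injective (by simp)]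
  congr 1
  ext x
  simp only [Set.mem_preimage, Set.mem_ofPred_eq, Set.mem_inter_iff, Set.mem_Ioi,
    Perm.coe_inv, symm_apply_apply]
  refine ⟨fun ⟨hx, hpos⟩ => ⟨hx.le, hpos⟩, fun ⟨hx, hpos⟩ => ⟨lt_of_le_of_ne hx ?_, hpos⟩⟩
  rintro rfl
  simp at hpos

/-- Downward induction on the value `i`: once all values above `i` sit at the same positions in
`h` and `h'`, the values `≤ i` occupy a common set of positions `W`, and `phi · i` is a strictly
antitone function of the position of `i` in `W`. -/
theorem phi_injective {n : ℕ} : Function.Injective (phi : Perm (Fin n) → Fin n → ℕ) := by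
  intro h h' hphi
  suffices ∀ i, h⁻¹ i = h'⁻¹ i from inv_injective (Equiv.ext this)
  intro i
  induction i using WellFoundedGT.induction with
  | _ i ih =>
    have hagree : ∀ x, i < h x ∨ i < h' x → h x = h' x := by
      rintro x (hx | hx)
      · have := ih _ hx
        simp only [Perm.coe_inv, symm_apply_apply, eq_symm_apply] at this
        exact this.symm
      · have := ih _ hx
        simp only [Perm.coe_inv, symm_apply_apply, symm_apply_eq] at this
        exact this.symm
    have hW : {x | h x ≤ i} = {x | h' x ≤ i} := by
      ext x
      simp only [Set.mem_ofPred_eq]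
      by_cases hx : i < h x ∨ i < h' x
      · rw [hagree x hx]
      · push Not at hx
        exact ⟨fun _ => hx.2, fun _ => hx.1⟩
    refine (Set.ncard_inter_Ioi_strictAntiOn (Set.toFinite {x | h x ≤ i})).injOn (by simp)
      (by rw [hW]; simp) ?_
    rw [← phi_eq_ncard_positions, hW, ← phi_eq_ncard_positions, hphi]

theorem phi_apply_zero {n : ℕ} (hn : 0 < n) (h : Perm (Fin n)) : phi h ⟨0, hn⟩ = 0 :=
  (Set.ncard_eq_zero).2 <| Set.eq_empty_of_forall_notMem fun _ hj => Nat.not_lt_zero _ hj.1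

/-- Stars and bars: padding a code with the slack `r - ∑ i, c a i` in the unused coordinate `i₀`
embeds `s` into `Sym ι r`. -/
theorem Set.ncard_le_choose_of_injOn {α ι : Type*} [Fintype ι] (i₀ : ι) (r : ℕ) {s : Set α}
    (c : α → ι → ℕ) (hc : Set.InjOn c s) (hc₀ : ∀ a ∈ s, c a i₀ = 0)
    (hsum : ∀ a ∈ s, ∑ i, c a i ≤ r) :
    s.ncard ≤ (Fintype.card ι + r - 1).choose r := by
  classical
  let e : s → {P : ι → ℕ // ∑ i, P i = r} := fun a =>
    ⟨c a + Pi.single i₀ (r - ∑ i, c a i), by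
      simp only [Pi.add_apply]
      rw [sum_add_distrib, Fintype.sum_pi_single']
      exact Nat.add_sub_of_le (hsum a a.2)⟩
  have he : Function.Injective e := by
    rintro ⟨a, ha⟩ ⟨b, hb⟩ hab
    refine Subtype.ext (hc ha hb (funext fun i => ?_))
    by_cases hi : i = i₀
    · rw [hi, hc₀ a ha, hc₀ b hb]
    · simpa [e, hi] using congrFun (congrArg Subtype.val hab) i
  calc s.ncard = Nat.card s := (Nat.card_coe_set_eq s).symm
    _ ≤ Nat.card (Sym ι r) := Nat.card_le_card_of_injective _
        ((Sym.equivNatSumOfFintype ι r).symm.injective.comp he)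
    _ = (Fintype.card ι + r - 1).choose r := by
      rw [Nat.card_eq_fintype_card, Sym.card_sym_eq_choose]

theorem stmt2_general (n r : ℕ) (hn : 1 ≤ n)
    (f : Equiv.Perm (Fin n)) :
    {g : Equiv.Perm (Fin n) | kendall f g ≤ r}.ncard ≤ (n + r - 1).choose (n - 1) := by
  have hinv : ∀ g ∈ {g : Perm (Fin n) | kendall f g ≤ r}, ∑ i, phi (f⁻¹ * g) i ≤ r :=
    fun g hg => (sum_phi_eq_card_inversions _).trans_le ((card_inversions_le_kendall f g).trans hg)
  calc {g : Perm (Fin n) | kendall f g ≤ r}.ncard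
      ≤ (Fintype.card (Fin n) + r - 1).choose r :=
        Set.ncard_le_choose_of_injOn ⟨0, hn⟩ r (fun g => phi (f⁻¹ * g))
          (phi_injective.comp (mul_right_injective f⁻¹)).injOn
          (fun g _ => phi_apply_zero hn _) hinv
    _ = (n + r - 1).choose (n - 1) := by
      rw [Fintype.card_fin, Nat.choose_symm_of_eq_add]
      omega

/-- ball-size bound `|B_r(n)| ≤ C(n+r−1, n−1)`. -/
theorem stmt2 (n r : ℕ) (hn : 1 ≤ n) (hr : r ≤ n * (n - 1) / 2)
    (f : Equiv.Perm (Fin n)) :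
    {g : Equiv.Perm (Fin n) | kendall f g ≤ r}.ncard ≤ (n + r - 1).choose (n - 1) :=
  stmt2_general n r hn f
end

section
/- Let k ≥ 3 with k or k+1 prime, and let C ⊆ S_{k+2} be the code {f : Φ(f)_{k+j} = ρ_j(f|^{[k]}), j = 1,2} with ρ_j(f) = (Σ_{i=1}^k (2i−1)^j f(i)) mod m (m the prime in {k, k+1}). Then |C| = k! and the map f ↦ f|^{[k]} is a bijection from C onto S_k. -/
open Finset

/-- The check symbol function of Construction 1 (values and positions in 1-based form). -/
def rho (m k j : ℕ) (h : Equiv.Perm (Fin k)) : ℕ :=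
  (∑ i : Fin k, (2 * (i : ℕ) + 1) ^ j * ((h i : ℕ) + 1)) % m

/-! The map `f ↦ (f|^{[k]}, Φ(f)_{k+1}, Φ(f)_{k+2})` is a bijection
`S_{k+2} → S_k × Z_{k+1} × Z_{k+2}`: `Φ(f)_{k+2}` locates the value `k+2`, then `Φ(f)_{k+1}`
locates `k+1`, and the remaining positions carry `f|^{[k]}` in order. Since `ρ_1, ρ_2 < m ≤ k+1`,
the code is the graph of `h ↦ (ρ_1 h, ρ_2 h)` under this bijection, so it projects bijectively
onto `S_k`. -/

open Equiv

section Factoradic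

variable {n : ℕ}

theorem phi_le (f : Perm (Fin n)) (i : Fin n) : phi f i ≤ i := by
  calc phi f i ≤ (Set.Iio i).ncard := Set.ncard_le_ncard (fun j hj => hj.1)
    _ = i := by rw [← coe_Iio, Set.ncard_coe_finset, Fin.card_Iio]

theorem phi_eq_card_filter (f : Perm (Fin n)) (i : Fin n) :
    phi f i = #{p ∈ Ioi (f⁻¹ i) | f p < i} := by
  have : {j | j < i ∧ f⁻¹ i < f⁻¹ j} = f '' ↑({p ∈ Ioi (f⁻¹ i) | f p < i} : Finset (Fin n)) := by
    rw [Equiv.image_eq_preimage_symm]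
    ext j
    simp [and_comm]
  rw [phi, this, Set.ncard_image_of_injective _ f.injective, Set.ncard_coe_finset]

theorem phi_add_card_filter (f : Perm (Fin n)) (i : Fin n) :
    phi f i + #{p ∈ Ioi (f⁻¹ i) | i < f p} = n - 1 - f⁻¹ i := by
  have hsplit : ({p ∈ Ioi (f⁻¹ i) | i < f p} : Finset (Fin n)) = {p ∈ Ioi (f⁻¹ i) | ¬ f p < i} := by
    refine filter_congr fun p hp => ?_
    have : f p ≠ i := fun h => (mem_Ioi.mp hp).ne' (by simp [← h])
    rw [not_lt, lt_iff_le_and_ne]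
    exact and_iff_left this.symm
  rw [phi_eq_card_filter, hsplit, card_filter_add_card_filter_not, Fin.card_Ioi]

theorem phi_last_add (f : Perm (Fin (n + 1))) :
    phi f (Fin.last n) + f⁻¹ (Fin.last n) = n := by
  have h := phi_add_card_filter f (Fin.last n)
  rw [filter_false_of_mem fun p _ => not_lt.mpr (Fin.le_last (f p)), card_empty] at h
  have := (f⁻¹ (Fin.last n)).isLt
  omega

theorem phi_castSucc_last_add (f : Perm (Fin (n + 2))) :
    phi f (Fin.last n).castSucc + f⁻¹ (Fin.last n).castSucc
      + (if f⁻¹ (Fin.last n).castSucc < f⁻¹ (Fin.last (n + 1)) then 1 else 0) = n + 1 := by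
  have hfilter : ({p ∈ Ioi (f⁻¹ (Fin.last n).castSucc) | (Fin.last n).castSucc < f p} : Finset _)
      = {p ∈ Ioi (f⁻¹ (Fin.last n).castSucc) | p = f⁻¹ (Fin.last (n + 1))} := by
    refine filter_congr fun p _ => ?_
    rw [Fin.castSucc_lt_iff_succ_le, Fin.succ_last, Fin.last_le_iff, Perm.eq_inv_iff_eq]
  have h := phi_add_card_filter f (Fin.last n).castSucc
  rw [hfilter, filter_eq'] at h
  have := (f⁻¹ (Fin.last n).castSucc).isLt
  by_cases hlt : f⁻¹ (Fin.last n).castSucc < f⁻¹ (Fin.last (n + 1))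
  · rw [if_pos (mem_Ioi.mpr hlt), card_singleton] at h
    rw [if_pos hlt]
    omega
  · rw [if_neg (mt mem_Ioi.mp hlt), card_empty] at h
    rw [if_neg hlt]
    omega

end Factoradic

section ProjUp

variable {n k : ℕ} (hk : k ≤ n)

theorem orderEmbOfFin_projUp_symm (f : Perm (Fin n)) (s : Finset (Fin n)) (hs : #s = k)
    (hmem : ∀ p, p ∈ s ↔ (f p : ℕ) < k) (b : Fin k) :
    s.orderEmbOfFin hs ((projUp hk f).symm b) = f⁻¹ (Fin.castLE hk b) := by
  obtain rfl : s = univ.image fun b : Fin k => f⁻¹ (Fin.castLE hk b) := by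
    ext p
    rw [hmem, mem_image]
    refine ⟨fun hp => ⟨⟨f p, hp⟩, by simp⟩, ?_⟩
    rintro ⟨b, -, rfl⟩
    simp
  rw [← coe_orderIsoOfFin_apply]
  exact congrArg Subtype.val (OrderIso.apply_symm_apply _ _)

include hk in
theorem card_filter_apply_val_lt (f : Perm (Fin n)) : #{p | (f p : ℕ) < k} = k := by
  rw [card_equiv f (t := ({x | (x : ℕ) < k} : Finset (Fin n))) (by simp), Fin.card_filter_val_lt,
    min_eq_right hk]

theorem eq_of_projUp_eq {f g : Perm (Fin n)} (hproj : projUp hk f = projUp hk g)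
    (htop : ∀ x : Fin n, k ≤ (x : ℕ) → f⁻¹ x = g⁻¹ x) : f = g := by
  have hlarge : ∀ p, k ≤ (f p : ℕ) ∨ k ≤ (g p : ℕ) → f p = g p := by
    rintro p (hp | hp)
    · exact (Perm.eq_inv_iff_eq.mp ((f.symm_apply_apply p).symm.trans (htop _ hp))).symm
    · exact (Perm.inv_eq_iff_eq.mp ((htop _ hp).trans (g.symm_apply_apply p))).symm
  have hsmall : ∀ p, (f p : ℕ) < k ↔ (g p : ℕ) < k := fun p => by
    by_cases h : (f p : ℕ) < k ∧ (g p : ℕ) < k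
    · exact iff_of_true h.1 h.2
    · rw [hlarge p (by omega)]
  have hs := card_filter_apply_val_lt hk f
  rw [← inv_inj]
  ext1 x
  rcases lt_or_ge (x : ℕ) k with hx | hx
  · obtain ⟨b, rfl⟩ : ∃ b : Fin k, Fin.castLE hk b = x := ⟨⟨x, hx⟩, rfl⟩
    rw [← orderEmbOfFin_projUp_symm hk f _ hs (fun p => by simp),
      ← orderEmbOfFin_projUp_symm hk g _ hs (fun p => by simp [hsmall]), hproj]
  · exact htop x hx

end ProjUp

theorem bijOn_fst_setOf_snd_eq {α β γ : Type*} (e : α ≃ β × γ) (c : β → γ) :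
    Set.BijOn (fun a => (e a).1) {a | (e a).2 = c (e a).1} Set.univ := by
  refine ⟨fun _ _ => Set.mem_univ _, fun a ha b hb hab => e.injective ?_, fun b _ => ?_⟩
  · exact Prod.ext hab (by rw [ha, hb]; exact congrArg c hab)
  · exact ⟨e.symm (b, c b), by simp, by simp⟩

section TopTwo

variable {k : ℕ}

noncomputable def splitTopTwo (k : ℕ) (f : Perm (Fin (k + 2))) :
    Perm (Fin k) × Fin (k + 1) × Fin (k + 2) :=
  (projUp (Nat.le_add_right k 2) f,
    ⟨phi f (Fin.last k).castSucc, Nat.lt_succ_of_le (phi_le f _)⟩,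
    ⟨phi f (Fin.last (k + 1)), Nat.lt_succ_of_le (phi_le f _)⟩)

theorem splitTopTwo_injective : Function.Injective (splitTopTwo k) := by
  intro f g h
  simp only [splitTopTwo, Prod.mk.injEq, Fin.mk.injEq] at h
  obtain ⟨hproj, hphi, hphi_last⟩ := h
  have hlast : f⁻¹ (Fin.last (k + 1)) = g⁻¹ (Fin.last (k + 1)) := by
    have := phi_last_add f
    have := phi_last_add g
    omega
  have hcast : f⁻¹ (Fin.last k).castSucc = g⁻¹ (Fin.last k).castSucc := by
    have hf := phi_castSucc_last_add f
    have hg := phi_castSucc_last_add g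
    have hnf : f⁻¹ (Fin.last k).castSucc ≠ f⁻¹ (Fin.last (k + 1)) := by simp [Fin.ext_iff]
    have hng : g⁻¹ (Fin.last k).castSucc ≠ g⁻¹ (Fin.last (k + 1)) := by simp [Fin.ext_iff]
    rw [hlast] at hf hnf
    rw [Fin.ne_iff_vne] at hnf hng
    rw [Fin.ext_iff]
    split_ifs at hf hg <;> rw [Fin.lt_def] at * <;> omega
  refine eq_of_projUp_eq _ hproj fun x hx => ?_
  obtain rfl | rfl : x = (Fin.last k).castSucc ∨ x = Fin.last (k + 1) := by
    simp only [Fin.ext_iff, Fin.val_castSucc, Fin.val_last]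
    omega
  exacts [hcast, hlast]

theorem splitTopTwo_bijective : Function.Bijective (splitTopTwo k) := by
  rw [Fintype.bijective_iff_injective_and_card]
  refine ⟨splitTopTwo_injective, ?_⟩
  simp only [Fintype.card_prod, Fintype.card_perm, Fintype.card_fin, Nat.factorial_succ]
  ring

end TopTwo

theorem rho_lt {m : ℕ} (hm : 0 < m) (k j : ℕ) (h : Perm (Fin k)) : rho m k j h < m :=
  Nat.mod_lt _ hm

/-- Construction 1 yields `k!` codewords, projecting bijectively onto `S_k`. -/
theorem stmt7 (k m : ℕ) (hm : m = k ∨ m = k + 1) (hp : m.Prime)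
    (C : Set (Equiv.Perm (Fin (k + 2))))
    (hC : C = {f : Equiv.Perm (Fin (k + 2)) |
      phi f ⟨k, by omega⟩ = rho m k 1 (projUp (by omega) f) ∧
      phi f ⟨k + 1, by omega⟩ = rho m k 2 (projUp (by omega) f)}) :
    C.ncard = Nat.factorial k ∧
    Set.BijOn (projUp (by omega : k ≤ k + 2)) C Set.univ := by
  have hm_le : m ≤ k + 1 := by omega
  let checkSymbols (h : Perm (Fin k)) : Fin (k + 1) × Fin (k + 2) :=
    (⟨rho m k 1 h, by have := rho_lt hp.pos k 1 h; omega⟩,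
      ⟨rho m k 2 h, by have := rho_lt hp.pos k 2 h; omega⟩)
  have hC_graph : C = {f | (splitTopTwo k f).2 = checkSymbols (splitTopTwo k f).1} := by
    rw [hC]
    ext f
    simp only [splitTopTwo, checkSymbols, Set.mem_ofPred_eq, Prod.mk.injEq, Fin.mk.injEq]
    rfl
  have hbij : Set.BijOn (projUp (by omega : k ≤ k + 2)) C Set.univ := by
    rw [hC_graph]
    exact bijOn_fst_setOf_snd_eq (.ofBijective _ splitTopTwo_bijective) checkSymbols
  refine ⟨?_, hbij⟩
  rw [hbij.ncard_eq, Set.ncard_univ, Nat.card_perm, Nat.card_fin]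
end

section
/- For integers k ≥ 2, define s(x) = (Σ_{i=1}^{k−1} i·x_i) mod (2k+3) for x ∈ Z^{k−1}, and let C' = {x ∈ Z^{k+1} : x_k = ⌊t(x)/3⌋ and x_{k+1} = t(x) mod 3}, where t(x) is the representative in [0, 2k+2] of 2s(x_1,...,x_{k−1}) mod (2k+3). Then every codeword of C' satisfies Σ_{i=1}^{k+1} i·x_i ≡ 0 (mod 2k+3), i.e., C' is contained in the Golomb–Welch perfect single-error-correcting code in the l1-metric, and hence C' has minimum l1-distance at least 3. -/
open Finset

lemma gw_key (n : ℕ) (w : Fin (n+1) → ℤ) (hw : ∃ i, w i ≠ 0)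
    (hd : (2*(n:ℤ)+3) ∣ ∑ i : Fin (n+1), ((i:ℕ)+1:ℤ) * w i) :
    3 ≤ ∑ i : Fin (n+1), |w i| := by
  by_contra hlt
  push_neg at hlt
  have hle2 : ∑ i : Fin (n+1), |w i| ≤ 2 := by omega
  have habs : |∑ i : Fin (n+1), ((i:ℕ)+1:ℤ) * w i| < 2*(n:ℤ)+3 := by
    calc |∑ i : Fin (n+1), ((i:ℕ)+1:ℤ) * w i|
        ≤ ∑ i : Fin (n+1), |((i:ℕ)+1:ℤ) * w i| := Finset.abs_sum_le_sum_abs _ _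
      _ ≤ ∑ i : Fin (n+1), ((n:ℤ)+1) * |w i| := by
          apply Finset.sum_le_sum
          intro i _
          rw [abs_mul, abs_of_nonneg (by positivity : (0:ℤ) ≤ ((i:ℕ)+1:ℤ))]
          have : ((i:ℕ):ℤ) ≤ (n:ℤ) := by exact_mod_cast Fin.is_le i
          have := abs_nonneg (w i)
          nlinarith
      _ = ((n:ℤ)+1) * ∑ i : Fin (n+1), |w i| := (Finset.mul_sum _ _ _).symm
      _ ≤ ((n:ℤ)+1) * 2 := by
          have : (0:ℤ) ≤ (n:ℤ)+1 := by positivity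
          nlinarith
      _ < 2*(n:ℤ)+3 := by
          have : (0:ℤ) ≤ (n:ℤ) := by positivity
          linarith
  have hz : ∑ i : Fin (n+1), ((i:ℕ)+1:ℤ) * w i = 0 := Int.eq_zero_of_abs_lt_dvd hd habs
  obtain ⟨i, hi⟩ := hw
  by_cases hcase : ∀ j, j ≠ i → w j = 0
  · have hsing : ∑ j : Fin (n+1), ((j:ℕ)+1:ℤ) * w j = ((i:ℕ)+1:ℤ) * w i :=
      Finset.sum_eq_single i (fun j _ hj => by rw [hcase j hj, mul_zero])
        (fun h => absurd (mem_univ i) h)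
    rw [hz] at hsing
    have : w i = 0 := by
      rcases mul_eq_zero.mp hsing.symm with h | h
      · exfalso; have : ((i:ℕ):ℤ) ≥ 0 := by positivity
        omega
      · exact h
    exact hi this
  · push_neg at hcase
    obtain ⟨j, hji, hj⟩ := hcase
    have hij : i ≠ j := fun h => hji (h ▸ rfl)
    have hpair_le : |w i| + |w j| ≤ 2 := by
      have hsub := Finset.sum_le_sum_of_subset_of_nonneg
        (Finset.subset_univ ({i, j} : Finset (Fin (n+1))))
        (fun l _ _ => abs_nonneg (w l))
      rw [Finset.sum_pair hij] at hsub
      linarith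
    have h1i : 1 ≤ |w i| := Int.one_le_abs hi
    have h1j : 1 ≤ |w j| := Int.one_le_abs hj
    have hii : |w i| = 1 := by omega
    have hjj : |w j| = 1 := by omega
    have hout : ∀ l, l ≠ i → l ≠ j → w l = 0 := by
      intro l hli hlj
      by_contra hl
      have h1l : 1 ≤ |w l| := Int.one_le_abs hl
      have hsub := Finset.sum_le_sum_of_subset_of_nonneg
        (Finset.subset_univ ({i, j, l} : Finset (Fin (n+1))))
        (fun t _ _ => abs_nonneg (w t))
      rw [Finset.sum_insert (by simp [hij, Ne.symm hli]),
          Finset.sum_insert (by simp [Ne.symm hlj]),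
          Finset.sum_singleton] at hsub
      · linarith
    have hsum2 : ∑ t : Fin (n+1), ((t:ℕ)+1:ℤ) * w t
        = ((i:ℕ)+1:ℤ) * w i + ((j:ℕ)+1:ℤ) * w j := by
      rw [← Finset.sum_subset (Finset.subset_univ ({i, j} : Finset (Fin (n+1))))
        (fun t _ ht => by
          have hti : t ≠ i := fun h => ht (by simp [h])
          have htj : t ≠ j := fun h => ht (by simp [h])
          rw [hout t hti htj, mul_zero])]
      exact Finset.sum_pair hij
    rw [hz] at hsum2
    have hneg : ((i:ℕ)+1:ℤ) * w i = -(((j:ℕ)+1:ℤ) * w j) := by linarith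
    have habs_eq : ((i:ℕ)+1:ℤ) = ((j:ℕ)+1:ℤ) := by
      have h := congrArg abs hneg
      rw [abs_neg, abs_mul, abs_mul, hii, hjj,
        abs_of_nonneg (by positivity : (0:ℤ) ≤ ((i:ℕ)+1:ℤ)),
        abs_of_nonneg (by positivity : (0:ℤ) ≤ ((j:ℕ)+1:ℤ))] at h
      linarith
    exact hij (Fin.ext (by
      have : ((i:ℕ):ℤ) = ((j:ℕ):ℤ) := by linarith
      exact_mod_cast this))


lemma gw_split (m : ℕ) (x : Fin (m+3) → ℤ) :
    ∑ i : Fin (m+3), ((i:ℕ)+1:ℤ) * x i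
      = (∑ i : Fin (m+1), ((i:ℕ)+1:ℤ) * x (Fin.castLE (by omega) i))
        + ((m:ℤ)+2) * x ⟨m+1, by omega⟩ + ((m:ℤ)+3) * x ⟨m+2, by omega⟩ := by
  rw [Fin.sum_univ_castSucc, Fin.sum_univ_castSucc]
  have h1 : (Fin.last (m+2) : Fin (m+3)) = ⟨m+2, by omega⟩ := rfl
  have h2 : ((Fin.last (m+1)).castSucc : Fin (m+3)) = ⟨m+1, by omega⟩ := rfl
  rw [h1, h2]
  have h3 : ∀ i : Fin (m+1), (i.castSucc.castSucc : Fin (m+3)) = Fin.castLE (by omega) i :=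
    fun i => rfl
  simp only [h3, Fin.coe_castLE, Fin.val_last]
  push_cast
  ring

set_option maxHeartbeats 1000000 in
/-- the systematic code of Construction 2 lies inside the
Golomb–Welch perfect code, hence has minimum ℓ₁-distance at least 3. -/
theorem stmt8 (k : ℕ) (hk : 2 ≤ k)
    (s : (Fin (k + 1) → ℤ) → ℤ)
    (hs : ∀ x, s x = (∑ i : Fin (k - 1), ((i : ℕ) + 1 : ℤ) *
      (2 * x (Fin.castLE (by omega) i))) % (2 * (k : ℤ) + 3))
    (C : Set (Fin (k + 1) → ℤ))
    (hC : C = {x | x ⟨k - 1, by omega⟩ = s x / 3 ∧ x ⟨k, by omega⟩ = s x % 3}) :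
    (∀ x ∈ C, (∑ i : Fin (k + 1), ((i : ℕ) + 1 : ℤ) * x i) % (2 * (k : ℤ) + 3) = 0) ∧
    (∀ x ∈ C, ∀ y ∈ C, x ≠ y → 3 ≤ ∑ i : Fin (k + 1), |x i - y i|) := by
  obtain ⟨m, rfl⟩ : ∃ m, k = m + 2 := ⟨k - 2, by omega⟩
  set M : ℤ := 2 * ((m + 2 : ℕ) : ℤ) + 3 with hM
  have hMval : M = 2 * (m : ℤ) + 7 := by push_cast [hM]; ring
  have part1 : ∀ x ∈ C, M ∣ ∑ i : Fin (m + 2 + 1), ((i : ℕ) + 1 : ℤ) * x i := by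
    intro x hx
    rw [hC] at hx
    obtain ⟨hx1, hx2⟩ := hx
    set T : ℤ := ∑ i : Fin (m + 1), ((i : ℕ) + 1 : ℤ) * x (Fin.castLE (by omega) i) with hT
    have hsx : s x = (2 * T) % M := by
      rw [hs x]
      congr 1
      rw [hT, Finset.mul_sum]
      exact Finset.sum_congr rfl (fun i _ => by ring)
    have hdT : M ∣ 2 * T - s x := Int.dvd_self_sub_of_emod_eq hsx.symm
    have hx1' : x ⟨m + 1, by omega⟩ = s x / 3 := hx1
    rw [gw_split m x, hx1', hx2]
    obtain ⟨t, ht⟩ := hdT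
    have h3 : s x = 3 * (s x / 3) + s x % 3 := (Int.mul_ediv_add_emod (s x) 3).symm
    refine ⟨((m:ℤ)+4) * (t + (s x / 3) + (s x % 3))
      - (T + ((m:ℤ)+2) * (s x / 3) + ((m:ℤ)+3) * (s x % 3)), ?_⟩
    rw [hMval] at ht ⊢
    nlinarith [ht, h3]
  constructor
  · intro x hx
    exact Int.emod_eq_zero_of_dvd (part1 x hx)
  · intro x hx y hy hne
    have hdw : M ∣ ∑ i : Fin (m + 2 + 1), ((i : ℕ) + 1 : ℤ) * (x i - y i) := by
      have : ∑ i : Fin (m + 2 + 1), ((i : ℕ) + 1 : ℤ) * (x i - y i)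
          = (∑ i : Fin (m + 2 + 1), ((i : ℕ) + 1 : ℤ) * x i)
            - ∑ i : Fin (m + 2 + 1), ((i : ℕ) + 1 : ℤ) * y i := by
        rw [← Finset.sum_sub_distrib]
        exact Finset.sum_congr rfl (fun i _ => by ring)
      rw [this]
      exact dvd_sub (part1 x hx) (part1 y hy)
    have hw : ∃ i, x i - y i ≠ 0 := by
      obtain ⟨i, hi⟩ := Function.ne_iff.mp hne
      exact ⟨i, sub_ne_zero_of_ne hi⟩
    exact gw_key (m + 2) (fun i => x i - y i) hw hdw
end

section
/- For all integers k ≥ 2 and d ≥ 2, the inequality Σ_{i=1}^{d−1} binom(k+i, i)·binom(2d−1−i, d)·2^{d−i−1} < (k+d)!/k! holds. -/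
open Finset

/-! The ratio of the sum to `(k + d).choose d` does not increase with `k`, because
`(k + i).choose i / (k + d).choose d = d! / (i! * (k + i + 1) ⋯ (k + d))`; so it suffices to treat
`k = 2`. There, small `d` is a finite computation, and for `d ≥ 23` every term is at most
`8 ^ d * (k + d).choose d` while `d * 8 ^ d < d!`. -/

def systematicCodeSum (k d : ℕ) : ℕ :=
  ∑ i ∈ Icc 1 (d - 1), (k + i).choose i * (2 * d - 1 - i).choose d * 2 ^ (d - i - 1)

theorem Nat.factorial_add_mul_factorial_add_le {m k i d : ℕ} (hmk : m ≤ k) (hid : i ≤ d) :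
    (k + i).factorial * (m + d).factorial ≤ (m + i).factorial * (k + d).factorial := by
  obtain ⟨j, rfl⟩ := Nat.exists_eq_add_of_le hid
  rw [← add_assoc, ← add_assoc, ← Nat.factorial_mul_ascFactorial (m + i),
    ← Nat.factorial_mul_ascFactorial (k + i)]
  calc (k + i).factorial * ((m + i).factorial * (m + i + 1).ascFactorial j)
      = (m + i).factorial * (k + i).factorial * (m + i + 1).ascFactorial j := by ring
    _ ≤ (m + i).factorial * (k + i).factorial * (k + i + 1).ascFactorial j := by
      gcongr
    _ = _ := by ring

theorem Nat.add_choose_mul_add_choose_le {m k i d : ℕ} (hmk : m ≤ k) (hid : i ≤ d) :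
    (k + i).choose i * (m + d).choose d ≤ (m + i).choose i * (k + d).choose d := by
  have hpos : 0 < i.factorial * k.factorial * d.factorial * m.factorial := by positivity
  refine Nat.le_of_mul_le_mul_right ?_ hpos
  calc (k + i).choose i * (m + d).choose d * (i.factorial * k.factorial * d.factorial * m.factorial)
      = ((k + i).choose i * k.factorial * i.factorial) *
          ((m + d).choose d * m.factorial * d.factorial) := by ring
    _ ≤ ((m + i).choose i * m.factorial * i.factorial) *
          ((k + d).choose d * k.factorial * d.factorial) := by
      simp only [Nat.add_choose_mul_factorial_mul_factorial]
      exact Nat.factorial_add_mul_factorial_add_le hmk hid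
    _ = (m + i).choose i * (k + d).choose d *
          (i.factorial * k.factorial * d.factorial * m.factorial) := by ring

theorem systematicCodeSum_mul_le {m k : ℕ} (hmk : m ≤ k) (d : ℕ) :
    systematicCodeSum k d * (m + d).choose d ≤ systematicCodeSum m d * (k + d).choose d := by
  simp only [systematicCodeSum, sum_mul]
  refine sum_le_sum fun i hi => ?_
  have hterm := Nat.add_choose_mul_add_choose_le hmk ((mem_Icc.1 hi).2.trans (Nat.sub_le d 1))
  calc (k + i).choose i * (2 * d - 1 - i).choose d * 2 ^ (d - i - 1) * (m + d).choose d
      = (k + i).choose i * (m + d).choose d * ((2 * d - 1 - i).choose d * 2 ^ (d - i - 1)) := by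
        ring
    _ ≤ (m + i).choose i * (k + d).choose d * ((2 * d - 1 - i).choose d * 2 ^ (d - i - 1)) := by
        gcongr
    _ = _ := by ring

theorem mul_eight_pow_lt_factorial {d : ℕ} (hd : 23 ≤ d) : d * 8 ^ d < d.factorial := by
  induction d, hd using Nat.le_induction with
  | base => decide
  | succ d hd ih =>
    calc (d + 1) * 8 ^ (d + 1) = (d + 1) * (8 * 8 ^ d) := by ring
      _ ≤ (d + 1) * (d * 8 ^ d) := by gcongr; omega
      _ < (d + 1) * d.factorial := by gcongr
      _ = (d + 1).factorial := (Nat.factorial_succ d).symm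

theorem systematicCodeSum_le (k d : ℕ) :
    systematicCodeSum k d ≤ d * (8 ^ d * (k + d).choose d) := by
  have hterm : ∀ i ∈ Icc 1 (d - 1),
      (k + i).choose i * (2 * d - 1 - i).choose d * 2 ^ (d - i - 1)
        ≤ 8 ^ d * (k + d).choose d := by
    intro i hi
    have hid : i ≤ d := by rw [mem_Icc] at hi; omega
    have hchoose : (k + i).choose i ≤ (k + d).choose d := by
      rw [← Nat.choose_symm_add, ← @Nat.choose_symm_add k d]
      exact Nat.choose_le_choose k (by omega)
    calc (k + i).choose i * (2 * d - 1 - i).choose d * 2 ^ (d - i - 1)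
        ≤ (k + d).choose d * 2 ^ (2 * d - 1 - i) * 2 ^ (d - i - 1) := by
          gcongr; exact Nat.choose_le_two_pow _ _
      _ = 2 ^ (2 * d - 1 - i + (d - i - 1)) * (k + d).choose d := by ring
      _ ≤ 2 ^ (3 * d) * (k + d).choose d := by gcongr <;> omega
      _ = 8 ^ d * (k + d).choose d := by rw [pow_mul]; norm_num
  calc systematicCodeSum k d ≤ #(Icc 1 (d - 1)) • (8 ^ d * (k + d).choose d) :=
        sum_le_card_nsmul _ _ _ hterm
    _ ≤ d * (8 ^ d * (k + d).choose d) := by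
        rw [Nat.card_Icc, smul_eq_mul]; gcongr; omega

theorem systematicCodeSum_lt_of_le {k d : ℕ} (hd : 23 ≤ d) :
    systematicCodeSum k d < (k + d).choose d * d.factorial :=
  calc systematicCodeSum k d ≤ d * 8 ^ d * (k + d).choose d := by
        simpa only [mul_assoc] using systematicCodeSum_le k d
    _ < d.factorial * (k + d).choose d := by
        gcongr
        · exact Nat.choose_pos (by omega)
        · exact mul_eight_pow_lt_factorial hd
    _ = _ := mul_comm _ _

theorem systematicCodeSum_two_lt {d : ℕ} (hd : 2 ≤ d) :
    systematicCodeSum 2 d < (2 + d).choose d * d.factorial := by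
  rcases lt_or_ge d 23 with hsmall | hlarge
  · -- `Nat.choose` is rewritten through factorials so that the kernel does not evaluate it by
    -- Pascal's recursion.
    interval_cases d <;>
      · simp only [systematicCodeSum, Nat.choose_eq_descFactorial_div_factorial]
        decide
  · exact systematicCodeSum_lt_of_le hlarge

theorem systematicCodeSum_lt {k d : ℕ} (hk : 2 ≤ k) (hd : 2 ≤ d) :
    systematicCodeSum k d < (k + d).choose d * d.factorial := by
  refine lt_of_mul_lt_mul_right (a := (2 + d).choose d) ?_ (Nat.zero_le _)
  calc systematicCodeSum k d * (2 + d).choose d ≤ systematicCodeSum 2 d * (k + d).choose d :=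
        systematicCodeSum_mul_le hk d
    _ < (2 + d).choose d * d.factorial * (k + d).choose d := by
        gcongr
        · exact Nat.choose_pos (by omega)
        · exact systematicCodeSum_two_lt hd
    _ = (k + d).choose d * d.factorial * (2 + d).choose d := by ring

/-- the combinatorial inequality behind Theorem 9. -/
theorem stmt12 (k d : ℕ) (hk : 2 ≤ k) (hd : 2 ≤ d) :
    ∑ i ∈ Finset.Icc 1 (d - 1),
        (k + i).choose i * (2 * d - 1 - i).choose d * 2 ^ (d - i - 1)
      < (k + d).factorial / k.factorial := by
  rw [← Nat.add_choose_mul_factorial_mul_factorial, mul_right_comm,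
    Nat.mul_div_cancel _ (Nat.factorial_pos k)]
  exact systematicCodeSum_lt hk hd
end

section
/- Let 1 ≤ d ≤ n and 1 ≤ k ≤ ⌈n/d⌉, and let A = {1, 1+d, 1+2d, ..., 1+(k−1)d}. Then the code C = {(f_1,...,f_n) ∈ S_n : {f_1,...,f_k} = A and f_{k+1} < f_{k+2} < ... < f_n} has exactly k! elements and pairwise l∞-distance at least d, where d_∞(f,g) = max_i |f(i)−g(i)|. -/
open Finset

/-!
A codeword is determined by where it sends the first `k` positions: it maps them bijectively onto
`A`, and the remaining positions must go to the complement of `A` in increasing order, which leaves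
exactly one choice. Hence codewords correspond to bijections `[k] → A`, of which there are `k!`.
Two distinct codewords differ at one of the first `k` positions, where both values are distinct
multiples of `d`, so they are at least `d` apart.
-/

section SystematicCode

open scoped Classical

variable {α : Type*} {s t : Set α}

lemma Equiv.Perm.mem_iff_apply_mem_of_image_eq {f : Equiv.Perm α} (hf : f '' s = t) (a : α) :
    a ∈ s ↔ f a ∈ t := by
  rw [← hf, f.injective.mem_set_image]

lemma Equiv.subtypeCongr_apply_of_mem (e : s ≃ t) (e' : ↥sᶜ ≃ ↥tᶜ) {a : α} (ha : a ∈ s) :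
    Equiv.subtypeCongr e e' a = e ⟨a, ha⟩ := by
  simp [Equiv.subtypeCongr, ha]

lemma Equiv.subtypeCongr_apply_of_notMem (e : s ≃ t) (e' : ↥sᶜ ≃ ↥tᶜ) {a : α} (ha : a ∉ s) :
    Equiv.subtypeCongr e e' a = e' ⟨a, ha⟩ := by
  simp [Equiv.subtypeCongr, ha]

lemma Equiv.image_subtypeCongr (e : s ≃ t) (e' : ↥sᶜ ≃ ↥tᶜ) :
    Equiv.subtypeCongr e e' '' s = t := by
  ext b
  constructor
  · rintro ⟨a, ha, rfl⟩
    rw [e.subtypeCongr_apply_of_mem e' ha]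
    exact (e ⟨a, ha⟩).2
  · intro hb
    refine ⟨e.symm ⟨b, hb⟩, (e.symm ⟨b, hb⟩).2, ?_⟩
    rw [e.subtypeCongr_apply_of_mem e' (e.symm ⟨b, hb⟩).2, Equiv.apply_symm_apply]

variable [LinearOrder α]

/-- The code of the theorem is `systematicCode {0, …, k - 1} A`. -/
def systematicCode (s t : Set α) : Set (Equiv.Perm α) :=
  {f | f '' s = t ∧ StrictMonoOn f sᶜ}

variable [Fintype α]

noncomputable def complOrderIso (hst : Nat.card s = Nat.card t) : ↥sᶜ ≃o ↥tᶜ :=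
  (Fintype.orderIsoFinOfCardEq _ rfl).symm.trans <|
    Fintype.orderIsoFinOfCardEq _ <| by
      rw [Fintype.card_compl_set, Fintype.card_compl_set]
      simp only [Nat.card_eq_fintype_card] at hst
      rw [hst]

noncomputable def systematicCodeEquiv (hst : Nat.card s = Nat.card t) :
    systematicCode s t ≃ (s ≃ t) where
  toFun f := f.1.subtypeEquiv (Equiv.Perm.mem_iff_apply_mem_of_image_eq f.2.1)
  invFun e := by
    refine ⟨Equiv.subtypeCongr e (complOrderIso hst).toEquiv, e.image_subtypeCongr _, ?_⟩
    intro a ha b hb hab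
    rw [e.subtypeCongr_apply_of_notMem _ ha, e.subtypeCongr_apply_of_notMem _ hb]
    exact (complOrderIso hst).strictMono (show (⟨a, ha⟩ : ↥sᶜ) < ⟨b, hb⟩ from hab)
  left_inv := by
    rintro ⟨f, hfs, hfm⟩
    ext a
    by_cases ha : a ∈ s
    · simp [Equiv.subtypeCongr_apply_of_mem _ _ ha]
    -- `f` restricts to an order isomorphism `sᶜ ≃o tᶜ`, and there is only one.
    · let g : ↥sᶜ ≃ ↥tᶜ := f.subtypeEquiv fun a ↦
        (Equiv.Perm.mem_iff_apply_mem_of_image_eq hfs a).not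
      have hg : StrictMono g := fun a b hab ↦ hfm a.2 b.2 hab
      have := congrArg (fun g : ↥sᶜ ≃o ↥tᶜ ↦ (g ⟨a, ha⟩ : α))
        (Subsingleton.elim (hg.orderIsoOfSurjective g g.surjective) (complOrderIso hst))
      simp only [Equiv.subtypeCongr_apply_of_notMem _ _ ha, RelIso.coe_fn_toEquiv]
      simpa [g] using this.symm
  right_inv e := by
    ext a
    simp [Equiv.subtypeCongr_apply_of_mem e _ a.2]

theorem ncard_systematicCode (hst : Nat.card s = Nat.card t) :
    (systematicCode s t).ncard = (Nat.card s).factorial := by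
  rw [← Nat.card_coe_set_eq, Nat.card_congr (systematicCodeEquiv hst), Nat.card_eq_fintype_card,
    Fintype.card_equiv (Fintype.equivOfCardEq (by simpa only [Nat.card_eq_fintype_card] using hst)),
    Nat.card_eq_fintype_card]

theorem eq_of_eqOn_of_mem_systematicCode {f g : Equiv.Perm α} (hf : f ∈ systematicCode s t)
    (hg : g ∈ systematicCode s t) (hfg : Set.EqOn f g s) : f = g := by
  have hst : Nat.card s = Nat.card t :=
    Nat.card_congr (f.subtypeEquiv (Equiv.Perm.mem_iff_apply_mem_of_image_eq hf.1))
  have := (systematicCodeEquiv hst).injective (a₁ := ⟨f, hf⟩) (a₂ := ⟨g, hg⟩) <| by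
    ext a
    exact hfg a.2
  exact congrArg Subtype.val this

end SystematicCode

lemma Nat.mul_lt_of_lt_of_le_add_sub_one_div {n k d j : ℕ} (hd : 1 ≤ d)
    (hk : k ≤ (n + d - 1) / d) (hj : j < k) : j * d < n := by
  have hkd : k * d ≤ n + d - 1 := (Nat.le_div_iff_mul_le hd).mp hk
  have hjk : (j + 1) * d ≤ k * d := Nat.mul_le_mul_right d hj
  rw [add_mul, one_mul] at hjk
  omega

lemma le_natAbs_sub_of_dvd {d a b : ℕ} (ha : d ∣ a) (hb : d ∣ b) (hab : a ≠ b) :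
    d ≤ ((a : ℤ) - b).natAbs :=
  Int.natAbs_le_of_dvd_ne_zero (dvd_sub (Int.natCast_dvd_natCast.mpr ha)
    (Int.natCast_dvd_natCast.mpr hb)) (sub_ne_zero.mpr (by exact_mod_cast hab))

lemma natAbs_sub_le_dinf {n : ℕ} (f g : Equiv.Perm (Fin n)) (i : Fin n) :
    ((f i : ℤ) - g i).natAbs ≤ dinf f g :=
  Finset.le_sup (f := fun i ↦ ((f i : ℤ) - g i).natAbs) (Finset.mem_univ i)

section Construction

variable {n k d : ℕ}

lemma card_setOf_val_lt (hkn : k ≤ n) : Nat.card {i : Fin n | (i : ℕ) < k} = k := by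
  have : {i : Fin n | (i : ℕ) < k} = Set.range (Fin.castLE hkn) := by
    ext i
    simp
  rw [this, Nat.card_range_of_injective (Fin.castLE_injective hkn), Nat.card_eq_fintype_card,
    Fintype.card_fin]

lemma card_preimage_val_image_mul (hd : 0 < d) (hjd : ∀ j < k, j * d < n) :
    Nat.card (Fin.val ⁻¹' ((· * d) '' {j | j < k}) : Set (Fin n)) = k := by
  rw [Nat.card_coe_set_eq, Set.ncard_preimage_of_injective_subset_range Fin.val_injective,
    Set.ncard_image_of_injective _ (mul_left_injective₀ hd.ne')]
  · exact Set.ncard_Iio_nat k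
  rintro _ ⟨j, hj, rfl⟩
  exact ⟨⟨j * d, hjd j hj⟩, rfl⟩

lemma setOf_eq_systematicCode (hjd : ∀ j < k, j * d < n) :
    {f : Equiv.Perm (Fin n) |
      ((fun i => ((f i : ℕ))) '' {i : Fin n | (i : ℕ) < k} =
        (fun j => j * d) '' {j : ℕ | j < k}) ∧
      ∀ i j : Fin n, k ≤ (i : ℕ) → i < j → f i < f j} =
    systematicCode {i : Fin n | (i : ℕ) < k} (Fin.val ⁻¹' ((· * d) '' {j | j < k})) := by
  ext f
  refine and_congr ?_ ⟨fun h i hi j _ hij ↦ h i j (not_lt.mp hi) hij,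
    fun h i j hi hij ↦ h (not_lt.mpr hi) (not_lt.mpr (hi.trans hij.le)) hij⟩
  rw [← (Set.image_injective.mpr Fin.val_injective).eq_iff, Set.image_image,
    Set.image_preimage_eq_of_subset]
  rintro _ ⟨j, hj, rfl⟩
  exact ⟨⟨j * d, hjd j hj⟩, rfl⟩

end Construction

/-- Values are 0-based: `A = {0, d, 2d, …, (k−1)d}`. -/
theorem stmt16_general (n k d : ℕ) (hd1 : 1 ≤ d)
    (hk : k ≤ (n + d - 1) / d)
    (C : Set (Equiv.Perm (Fin n)))
    (hC : C = {f : Equiv.Perm (Fin n) |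
      ((fun i => ((f i : ℕ))) '' {i : Fin n | (i : ℕ) < k} =
        (fun j => j * d) '' {j : ℕ | j < k}) ∧
      ∀ i j : Fin n, k ≤ (i : ℕ) → i < j → f i < f j}) :
    C.ncard = k.factorial ∧
    (∀ f ∈ C, ∀ g ∈ C, f ≠ g → d ≤ dinf f g) := by
  have hjd : ∀ j < k, j * d < n := fun j ↦ Nat.mul_lt_of_lt_of_le_add_sub_one_div hd1 hk
  have hkn : k ≤ n := by
    by_contra! hnk
    exact (hjd n hnk).not_ge (Nat.le_mul_of_pos_right n hd1)
  rw [setOf_eq_systematicCode hjd] at hC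
  subst hC
  refine ⟨?_, fun f hf g hg hfg ↦ ?_⟩
  · rw [ncard_systematicCode (by rw [card_setOf_val_lt hkn, card_preimage_val_image_mul hd1 hjd]),
      card_setOf_val_lt hkn]
  obtain ⟨i, hi, hfgi⟩ : ∃ i ∈ {i : Fin n | (i : ℕ) < k}, f i ≠ g i := by
    by_contra! h
    exact hfg (eq_of_eqOn_of_mem_systematicCode hf hg h)
  obtain ⟨a, -, ha⟩ := hf.1.subset (Set.mem_image_of_mem f hi)
  obtain ⟨b, -, hb⟩ := hg.1.subset (Set.mem_image_of_mem g hi)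
  calc d ≤ ((f i : ℕ) - (g i : ℕ) : ℤ).natAbs :=
        le_natAbs_sub_of_dvd (ha ▸ dvd_mul_left d a) (hb ▸ dvd_mul_left d b)
          (Fin.val_injective.ne hfgi)
    _ ≤ dinf f g := natAbs_sub_le_dinf f g i

/-- Construction 5, a `[n,k,d]` systematic code in the ℓ∞-metric
for constant distance (values written 0-based: `A = {0, d, 2d, …, (k−1)d}`). -/
theorem stmt16 (n k d : ℕ) (hd1 : 1 ≤ d) (hdn : d ≤ n)
    (hk1 : 1 ≤ k) (hk : k ≤ (n + d - 1) / d)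
    (C : Set (Equiv.Perm (Fin n)))
    (hC : C = {f : Equiv.Perm (Fin n) |
      ((fun i => ((f i : ℕ))) '' {i : Fin n | (i : ℕ) < k} =
        (fun j => j * d) '' {j : ℕ | j < k}) ∧
      ∀ i j : Fin n, k ≤ (i : ℕ) → i < j → f i < f j}) :
    C.ncard = k.factorial ∧
    (∀ f ∈ C, ∀ g ∈ C, f ≠ g → d ≤ dinf f g) :=
  stmt16_general n k d hd1 hk C hC
end

section
/- For 1 ≤ d ≤ n, the code C' = {f ∈ S_n : f(i) ≡ i (mod d) for all i} has size (⌈n/d⌉!)^{n mod d} · (⌊n/d⌋!)^{d − (n mod d)} and minimum l∞-distance at least d. -/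
/-!
The permutations with `f i ≡ i (mod d)` are exactly the stabiliser of the residue map
`Fin n → Fin d`, i.e. independent permutations of the residue classes; the classes of the
residues `r < n % d` have `n / d + 1` elements and the others `n / d`. Two distinct such
permutations differ at some `i` where `f i ≡ g i (mod d)`, so there `|f i - g i| ≥ d`.
-/

open Finset

open Equiv
open scoped Nat

lemma Nat.add_sub_one_div_eq_div_add_one {n d : ℕ} (hd : 0 < d) (h : n % d ≠ 0) :
    (n + d - 1) / d = n / d + 1 := by
  have := Nat.div_add_mod' n d
  have := Nat.mod_lt n hd
  refine Nat.div_eq_of_lt_le ?_ ?_ <;> simp only [Nat.add_mul, Nat.one_mul] <;> omega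

lemma Fin.ncard_setOf_val_mod_eq (n : ℕ) {d r : ℕ} (hd : 0 < d) (hr : r < d) :
    {i : Fin n | (i : ℕ) % d = r}.ncard = n / d + if r < n % d then 1 else 0 := by
  rw [← Nat.mod_eq_of_lt hr, ← Nat.count_modEq_card n hd r, Nat.count_eq_card_filter_range,
    ← Set.ncard_coe_finset, ← Set.ncard_image_of_injective _ Fin.val_injective]
  congr 1
  ext k
  simp [Nat.ModEq, Nat.mod_eq_of_lt hr, Fin.exists_iff, and_comm]

lemma prod_fin_factorial_add_ite (q : ℕ) {m d : ℕ} (hm : m ≤ d) :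
    ∏ r : Fin d, (q + if (r : ℕ) < m then 1 else 0)! = (q + 1)! ^ m * q ! ^ (d - m) := by
  obtain ⟨k, rfl⟩ := Nat.exists_eq_add_of_le hm
  rw [Fin.prod_univ_eq_prod_range (fun r => (q + if r < m then 1 else 0)!), prod_range_add,
    Nat.add_sub_cancel_left]
  simp +contextual [prod_congr rfl]

theorem ncard_setOf_perm_val_mod_eq {n d : ℕ} (hd : 0 < d) :
    {f : Perm (Fin n) | ∀ i, (f i : ℕ) % d = i % d}.ncard =
      (n / d + 1)! ^ (n % d) * (n / d)! ^ (d - n % d) := by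
  let res : Fin n → Fin d := fun i => ⟨i % d, Nat.mod_lt _ hd⟩
  have hstab :
      {f : Perm (Fin n) | ∀ i, (f i : ℕ) % d = i % d} = {f : Perm (Fin n) | res ∘ f = res} := by
    ext f
    simp [res, funext_iff, Fin.ext_iff]
  have hfiber (r : Fin d) :
      {i | res i = r}.ncard = n / d + if (r : ℕ) < n % d then 1 else 0 := by
    simpa [res, Fin.ext_iff] using Fin.ncard_setOf_val_mod_eq n hd r.2
  rw [hstab, DomMulAct.stabilizer_ncard, Fintype.prod_congr _ _ fun r => congrArg _ (hfiber r),
    prod_fin_factorial_add_ite _ (Nat.mod_lt n hd).le]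

lemma Nat.ModEq.le_natAbs_sub {a b m : ℕ} (h : a ≡ b [MOD m]) (hne : a ≠ b) :
    m ≤ ((a : ℤ) - b).natAbs := by
  by_contra! hlt
  refine hne (h.eq_of_abs_lt ?_)
  rw [abs_sub_comm, Int.abs_eq_natAbs]
  exact_mod_cast hlt

lemma le_dinf_of_modEq {n d : ℕ} {f g : Perm (Fin n)} {i : Fin n}
    (h : (f i : ℕ) ≡ g i [MOD d]) (hne : f i ≠ g i) : d ≤ dinf f g :=
  le_sup_of_le (mem_univ i) (h.le_natAbs_sub (Fin.val_injective.ne hne))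

theorem stmt17_general (n d : ℕ) (hd1 : 1 ≤ d)
    (C : Set (Equiv.Perm (Fin n)))
    (hC : C = {f : Equiv.Perm (Fin n) | ∀ i : Fin n, (f i : ℕ) % d = (i : ℕ) % d}) :
    C.ncard = ((n + d - 1) / d).factorial ^ (n % d) *
        (n / d).factorial ^ (d - n % d) ∧
    (∀ f ∈ C, ∀ g ∈ C, f ≠ g → d ≤ dinf f g) := by
  subst hC
  refine ⟨?_, fun f hf g hg hne => ?_⟩
  · rw [ncard_setOf_perm_val_mod_eq hd1]
    rcases eq_or_ne (n % d) 0 with h | h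
    · simp [h]
    · rw [Nat.add_sub_one_div_eq_div_add_one hd1 h]
  · obtain ⟨i, hi⟩ : ∃ i, f i ≠ g i := not_forall.mp (mt Equiv.ext hne)
    exact le_dinf_of_modEq ((hf i).trans (hg i).symm) hi

/-- Construction 1 of Tamo–Schwartz (0-based form
`f(i) ≡ i (mod d)`), its size and its minimum ℓ∞-distance. -/
theorem stmt17 (n d : ℕ) (hd1 : 1 ≤ d) (hdn : d ≤ n)
    (C : Set (Equiv.Perm (Fin n)))
    (hC : C = {f : Equiv.Perm (Fin n) | ∀ i : Fin n, (f i : ℕ) % d = (i : ℕ) % d}) :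
    C.ncard = ((n + d - 1) / d).factorial ^ (n % d) *
        (n / d).factorial ^ (d - n % d) ∧
    (∀ f ∈ C, ∀ g ∈ C, f ≠ g → d ≤ dinf f g) :=
  stmt17_general n d hd1 C hC
end
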